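/- arXiv:1303.2394 — 2 statements merged into one kernel-verified Lean document; each statement's English description precedes it below -/
import Mathlib

section
/- Let L = ℤ + ℤτ ⊂ ℂ with Im(τ) ≠ 0 and let L^∨ be its dual lattice. Let ζ ∈ ℂ. There exists a nonzero entire function g : ℂ → ℂ satisfying g(z + χ) = exp(ζ·conj(χ))·g(z) for all z ∈ ℂ and all χ ∈ L if and only if ζ ∈ L^∨. -/
open Complex

/-- The lattice L = ℤ + ℤτ as a set. -/
def latticeSet (τ : ℂ) : Set ℂ := {χ : ℂ | ∃ n m : ℤ, χ = (n : ℂ) + (m : ℂ) * τ}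

/-- The dual lattice L^∨ = {ζ | Im(χ · conj ζ) ∈ πℤ for all χ ∈ L}. -/
def dualLatticeSet (τ : ℂ) : Set ℂ :=
  {ζ : ℂ | ∀ χ ∈ latticeSet τ, ∃ k : ℤ, (χ * (starRingEnd ℂ) ζ).im = Real.pi * (k : ℝ)}

/-!
Multiplying `g` by `exp (-(conj ζ * z))` turns the factor of automorphy `exp (ζ * conj χ)` into
`exp (ζ * conj χ - conj (ζ * conj χ))`, which has modulus one. The new entire function therefore
has `L`-periodic modulus, so it is bounded on the compact fundamental parallelogram and hence on
`ℂ`; by Liouville it is constant, which forces every factor to be `1`, i.e. `ζ ∈ L^∨`.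
Conversely, for `ζ ∈ L^∨` the function `exp (conj ζ * z)` works.
-/

open ComplexConjugate Set

def parallelogram (τ : ℂ) : Set ℂ :=
  (fun p : ℝ × ℝ => (p.1 : ℂ) + p.2 * τ) '' (Icc 0 1 ×ˢ Icc 0 1)

theorem isCompact_parallelogram (τ : ℂ) : IsCompact (parallelogram τ) :=
  (isCompact_Icc.prod isCompact_Icc).image (by fun_prop)

theorem exists_mem_latticeSet_sub_mem_parallelogram {τ : ℂ} (hτ : τ.im ≠ 0) (z : ℂ) :
    ∃ χ ∈ latticeSet τ, z - χ ∈ parallelogram τ := by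
  set b : ℝ := z.im / τ.im
  set a : ℝ := z.re - b * τ.re
  have hz : z = a + b * τ := by
    apply Complex.ext
    · simp [a]
    · simp [b]
      field_simp
  refine ⟨⌊a⌋ + ⌊b⌋ * τ, ⟨⌊a⌋, ⌊b⌋, rfl⟩, ⟨(Int.fract a, Int.fract b), ?_, ?_⟩⟩
  · exact ⟨⟨Int.fract_nonneg a, (Int.fract_lt_one a).le⟩,
      ⟨Int.fract_nonneg b, (Int.fract_lt_one b).le⟩⟩
  · simp only [Int.fract, hz]
    push_cast
    ring

theorem range_eq_image_parallelogram_of_periodic {α : Type*} {τ : ℂ} (hτ : τ.im ≠ 0)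
    {f : ℂ → α} (hf : ∀ z, ∀ χ ∈ latticeSet τ, f (z + χ) = f z) :
    range f = f '' parallelogram τ := by
  refine (image_subset_range f _).antisymm' ?_
  rintro _ ⟨z, rfl⟩
  obtain ⟨χ, hχ, hzχ⟩ := exists_mem_latticeSet_sub_mem_parallelogram hτ z
  exact ⟨z - χ, hzχ, by rw [← hf (z - χ) χ hχ, sub_add_cancel]⟩

theorem isCompact_range_of_periodic {α : Type*} [TopologicalSpace α] {τ : ℂ} (hτ : τ.im ≠ 0)
    {f : ℂ → α} (hc : Continuous f) (hf : ∀ z, ∀ χ ∈ latticeSet τ, f (z + χ) = f z) :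
    IsCompact (range f) := by
  rw [range_eq_image_parallelogram_of_periodic hτ hf]
  exact (isCompact_parallelogram τ).image hc

theorem Differentiable.apply_eq_apply_of_norm_periodic {τ : ℂ} (hτ : τ.im ≠ 0) {F : ℂ → ℂ}
    (hF : Differentiable ℂ F) (hper : ∀ z, ∀ χ ∈ latticeSet τ, ‖F (z + χ)‖ = ‖F z‖) (z w : ℂ) :
    F z = F w := by
  obtain ⟨C, hC⟩ := (isCompact_range_of_periodic hτ hF.continuous.norm hper).isBounded.bddAbove
  refine hF.apply_eq_apply_of_bounded (isBounded_iff_forall_norm_le.2 ⟨C, ?_⟩) z w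
  rintro _ ⟨x, rfl⟩
  exact hC ⟨x, rfl⟩

theorem norm_exp_sub_conj (a : ℂ) : ‖exp (a - conj a)‖ = 1 := by
  rw [sub_conj, norm_exp_ofReal_mul_I]

theorem exp_sub_conj_eq_one_iff (a : ℂ) : exp (a - conj a) = 1 ↔ ∃ k : ℤ, a.im = Real.pi * k := by
  rw [sub_conj, Complex.exp_eq_one_iff]
  refine exists_congr fun k => ?_
  rw [show (k : ℂ) * (2 * Real.pi * I) = ((2 * Real.pi * k : ℝ) : ℂ) * I by push_cast; ring,
    mul_left_inj' I_ne_zero, ofReal_inj]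
  constructor <;> intro h <;> linarith

theorem conj_mul_eq_conj_mul_conj (ζ χ : ℂ) : conj ζ * χ = conj (ζ * conj χ) := by
  simp

theorem mem_dualLatticeSet_iff {τ ζ : ℂ} :
    ζ ∈ dualLatticeSet τ ↔
      ∀ χ ∈ latticeSet τ, exp (ζ * conj χ - conj ζ * χ) = 1 := by
  refine forall₂_congr fun χ _ => ?_
  rw [conj_mul_eq_conj_mul_conj, exp_sub_conj_eq_one_iff, mul_comm χ, conj_mul_eq_conj_mul_conj,
    conj_im]
  refine ⟨fun ⟨k, hk⟩ => ⟨-k, ?_⟩, fun ⟨k, hk⟩ => ⟨-k, ?_⟩⟩ <;> push_cast <;> linarith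

theorem stmt_6 (τ : ℂ) (hτ : τ.im ≠ 0) (ζ : ℂ) :
    (∃ g : ℂ → ℂ, (∃ z : ℂ, g z ≠ 0) ∧ Differentiable ℂ g ∧
        (∀ z : ℂ, ∀ χ ∈ latticeSet τ,
          g (z + χ) = Complex.exp (ζ * (starRingEnd ℂ) χ) * g z))
    ↔ ζ ∈ dualLatticeSet τ := by
  rw [mem_dualLatticeSet_iff]
  constructor
  · rintro ⟨g, ⟨z₀, hz₀⟩, hg, hper⟩ χ hχ
    set F : ℂ → ℂ := fun z => exp (-(conj ζ * z)) * g z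
    have hFper : ∀ z, ∀ ψ ∈ latticeSet τ, F (z + ψ) = exp (ζ * conj ψ - conj ζ * ψ) * F z := by
      intro z ψ hψ
      simp only [F, hper z ψ hψ, mul_add, neg_add, sub_eq_add_neg, Complex.exp_add]
      ring
    have hF : Differentiable ℂ F := by fun_prop
    have hnorm : ∀ z, ∀ ψ ∈ latticeSet τ, ‖F (z + ψ)‖ = ‖F z‖ := by
      intro z ψ hψ
      rw [hFper z ψ hψ, norm_mul, conj_mul_eq_conj_mul_conj, norm_exp_sub_conj, one_mul]
    have hFz₀ : F z₀ ≠ 0 := mul_ne_zero (exp_ne_zero _) hz₀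
    apply mul_right_cancel₀ hFz₀
    rw [one_mul, ← hFper z₀ χ hχ, hF.apply_eq_apply_of_norm_periodic hτ hnorm]
  · intro hζ
    refine ⟨fun z => exp (conj ζ * z), ⟨0, exp_ne_zero _⟩, by fun_prop, fun z χ hχ => ?_⟩
    beta_reduce
    rw [mul_add, Complex.exp_add, mul_comm, ← sub_add_cancel (ζ * conj χ) (conj ζ * χ),
      Complex.exp_add, hζ χ hχ, one_mul]
end

section
/- Let L = ℤ + ℤτ ⊂ ℂ with Im(τ) > 0, let L^∨ be its dual lattice, and let ζ ∈ ℂ with ζ ∉ L^∨. Suppose f : ℂ → ℂ is a continuous, L-periodic function and g : ℂ → ℂ is entire with f(z) = exp(−ζ·conj(z))·g(z) for all z. Then f is bounded on ℂ; and if moreover g satisfies the automorphy relation g(z + χ) = exp(ζ·conj(χ))·g(z) for all χ ∈ L, then g ≡ 0 (equivalently f ≡ 0). -/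
/-!
A continuous `L`-periodic function is bounded, being determined by its values on the compact
parallelogram spanned by `1` and `τ`. Since `|exp (-ζ z̄)| = |exp (-ζ̄ z)|`, the entire function
`g z · exp (-ζ̄ z)` has the same modulus as `f`, so by Liouville `g z = c · exp (ζ̄ z)`. Comparing
with the automorphy relation at `z = 0` gives `c · exp (ζ̄ χ) = c · exp (ζ χ̄)` for `χ ∈ L`; if
`c ≠ 0` then `ζ̄ χ - ζ χ̄ = 2i Im (χ ζ̄)` lies in `2πiℤ`, i.e. `ζ ∈ L^∨`.
-/

open Complex

def latticeParallelogram (τ : ℂ) : Set ℂ :=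
  (fun p : ℝ × ℝ => (p.1 : ℂ) + (p.2 : ℂ) * τ) '' (Set.Icc 0 1 ×ˢ Set.Icc 0 1)

theorem isCompact_latticeParallelogram (τ : ℂ) : IsCompact (latticeParallelogram τ) :=
  (isCompact_Icc.prod isCompact_Icc).image (by fun_prop)

theorem exists_ofReal_add_ofReal_mul (τ : ℂ) (hτ : τ.im ≠ 0) (z : ℂ) :
    ∃ a b : ℝ, z = (a : ℂ) + (b : ℂ) * τ := by
  refine ⟨z.re - z.im / τ.im * τ.re, z.im / τ.im, Complex.ext ?_ ?_⟩
  · simp [Complex.mul_re]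
  · simp [Complex.mul_im]
    field_simp

theorem exists_sub_mem_latticeParallelogram (τ : ℂ) (hτ : τ.im ≠ 0) (z : ℂ) :
    ∃ χ ∈ latticeSet τ, z - χ ∈ latticeParallelogram τ := by
  obtain ⟨a, b, rfl⟩ := exists_ofReal_add_ofReal_mul τ hτ z
  refine ⟨⌊a⌋ + ⌊b⌋ * τ, ⟨⌊a⌋, ⌊b⌋, rfl⟩, (Int.fract a, Int.fract b),
    ⟨⟨Int.fract_nonneg a, (Int.fract_lt_one a).le⟩, Int.fract_nonneg b, (Int.fract_lt_one b).le⟩,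
    ?_⟩
  simp only [Int.fract]
  push_cast
  ring

theorem exists_bound_of_continuous_of_periodic {E : Type*} [NormedAddCommGroup E] (τ : ℂ)
    (hτ : τ.im ≠ 0) {f : ℂ → E} (hf : Continuous f)
    (hper : ∀ z : ℂ, ∀ χ ∈ latticeSet τ, f (z + χ) = f z) :
    ∃ C : ℝ, ∀ z : ℂ, ‖f z‖ ≤ C := by
  obtain ⟨C, hC⟩ :=
    (isCompact_latticeParallelogram τ).exists_bound_of_continuousOn hf.continuousOn
  refine ⟨C, fun z => ?_⟩
  obtain ⟨χ, hχ, hmem⟩ := exists_sub_mem_latticeParallelogram τ hτ z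
  have h_shift := hper (z - χ) χ hχ
  rw [sub_add_cancel] at h_shift
  exact h_shift ▸ hC _ hmem

theorem exists_eq_const_mul_exp_of_bounded {ζ : ℂ} {g : ℂ → ℂ} (hg : Differentiable ℂ g)
    {C : ℝ} (hC : ∀ z, ‖exp (-ζ * (starRingEnd ℂ) z) * g z‖ ≤ C) :
    ∃ c : ℂ, ∀ z, g z = c * exp ((starRingEnd ℂ) ζ * z) := by
  set G : ℂ → ℂ := fun w => g w * exp (-(starRingEnd ℂ) ζ * w)
  have hG_bdd : Bornology.IsBounded (Set.range G) := by
    refine (Metric.isBounded_closedBall (x := 0) (r := C)).subset ?_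
    rintro _ ⟨w, rfl⟩
    have h_norm : ‖G w‖ = ‖exp (-ζ * (starRingEnd ℂ) w) * g w‖ := by
      simp only [G, norm_mul, Complex.norm_exp, Complex.mul_re, Complex.neg_re, Complex.neg_im,
        Complex.conj_re, Complex.conj_im]
      ring_nf
    simpa [h_norm] using hC w
  have hG_const : ∀ w, G w = G 0 :=
    fun w => (hg.mul (by fun_prop)).apply_eq_apply_of_bounded hG_bdd w 0
  refine ⟨G 0, fun z => ?_⟩
  rw [← hG_const z, mul_assoc, ← Complex.exp_add]
  simp

theorem exists_int_im_mul_conj_eq_of_exp_eq {ζ χ : ℂ}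
    (h : exp ((starRingEnd ℂ) ζ * χ) = exp (ζ * (starRingEnd ℂ) χ)) :
    ∃ k : ℤ, (χ * (starRingEnd ℂ) ζ).im = Real.pi * k := by
  obtain ⟨n, hn⟩ := Complex.exp_eq_exp_iff_exists_int.mp h
  refine ⟨n, ?_⟩
  have him := congrArg Complex.im hn
  simp only [Complex.add_im, Complex.mul_im, Complex.mul_re, Complex.conj_re, Complex.conj_im,
    Complex.I_re, Complex.I_im, Complex.ofReal_re, Complex.ofReal_im, Complex.intCast_re,
    Complex.intCast_im, Complex.re_ofNat, Complex.im_ofNat] at him ⊢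
  linarith

theorem stmt_16 (τ : ℂ) (hτ : 0 < τ.im) (ζ : ℂ) (hζ : ζ ∉ dualLatticeSet τ)
    (f g : ℂ → ℂ) (hf : Continuous f)
    (hper : ∀ z : ℂ, ∀ χ ∈ latticeSet τ, f (z + χ) = f z)
    (hg : Differentiable ℂ g)
    (hfg : ∀ z : ℂ, f z = Complex.exp (-ζ * (starRingEnd ℂ) z) * g z) :
    (∃ C : ℝ, ∀ z : ℂ, ‖f z‖ ≤ C) ∧
    ((∀ z : ℂ, ∀ χ ∈ latticeSet τ,
        g (z + χ) = Complex.exp (ζ * (starRingEnd ℂ) χ) * g z) →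
      ∀ z : ℂ, g z = 0) := by
  obtain ⟨C, hC⟩ := exists_bound_of_continuous_of_periodic τ hτ.ne' hf hper
  refine ⟨⟨C, hC⟩, fun haut z => ?_⟩
  obtain ⟨c, hc⟩ := exists_eq_const_mul_exp_of_bounded hg (C := C) fun w => hfg w ▸ hC w
  rcases eq_or_ne c 0 with rfl | hc0
  · simp [hc z]
  refine absurd (fun χ hχ => exists_int_im_mul_conj_eq_of_exp_eq ?_) hζ
  have h := haut 0 χ hχ
  rw [zero_add, hc, hc 0, mul_zero, Complex.exp_zero, mul_one, mul_comm] at h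
  exact mul_right_cancel₀ hc0 h
end
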